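/- Let n ≥ 3 be odd and q ∈ k a primitive n-th root of unity. Let A = k[u]/(u^n − 1) carry the u_q(sl₂)-module-algebra structure (κ, e, f) with κ(u) = q²·u, f(u) = γ·1_A, e(u) = δ·u², where γ, δ ∈ k are nonzero with γδ = −q. If (T_a, T_b, T_c, T_d) is an extension of this action to a D(u_q(sl₂))-module-algebra structure on A, then exactly one of the following holds: (i) T_a(u) = q·u, T_b(u) = γ(q − q^{-1})·1_A, T_c(u) = 0, T_d(u) = q^{-1}·u; or (ii) T_a(u) = q^{-1}·u, T_b(u) = 0, T_c(u) = γ^{-1}(q − q^{-1})·u², T_d(u) = q·u. -/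

import Mathlib

/-- The data of an extension of a `u_q(sl₂)`-module-algebra structure `(κ, e, f)` on `A`
to a `D(u_q(sl₂))`-module-algebra structure, given by the actions `Ta, Tb, Tc, Td` of the
dual generators `a, b, c, d` of the Drinfel'd double. -/
def IsDUqExtension {k A : Type*} [Field k] [CommRing A] [Algebra k A]
    (n : ℕ) (q : k) (κ : A ≃ₐ[k] A) (e f : A →ₗ[k] A)
    (Ta Tb Tc Td : A →ₗ[k] A) : Prop :=
  Ta 1 = 1 ∧ Td 1 = 1 ∧ Tb 1 = 0 ∧ Tc 1 = 0 ∧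
  (∀ v w : A, Ta (v * w) = Ta v * Ta w + Tc v * Tb w) ∧
  (∀ v w : A, Tb (v * w) = Tb v * Ta w + Td v * Tb w) ∧
  (∀ v w : A, Tc (v * w) = Ta v * Tc w + Tc v * Td w) ∧
  (∀ v w : A, Td (v * w) = Tb v * Tc w + Td v * Td w) ∧
  Ta ^ n = 1 ∧ Td ^ n = 1 ∧ Tb ^ n = 0 ∧ Tc ^ n = 0 ∧
  Tb ∘ₗ Ta = q • (Ta ∘ₗ Tb) ∧
  Td ∘ₗ Tb = q • (Tb ∘ₗ Td) ∧
  Tc ∘ₗ Ta = q • (Ta ∘ₗ Tc) ∧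
  Td ∘ₗ Tc = q • (Tc ∘ₗ Td) ∧
  Tb ∘ₗ Tc = Tc ∘ₗ Tb ∧
  Ta ∘ₗ Td = q⁻¹ • (Tb ∘ₗ Tc) + LinearMap.id ∧
  κ.toLinearMap ∘ₗ Ta = Ta ∘ₗ κ.toLinearMap ∧
  κ.toLinearMap ∘ₗ Tb = (q⁻¹) ^ 2 • (Tb ∘ₗ κ.toLinearMap) ∧
  κ.toLinearMap ∘ₗ Tc = q ^ 2 • (Tc ∘ₗ κ.toLinearMap) ∧
  κ.toLinearMap ∘ₗ Td = Td ∘ₗ κ.toLinearMap ∧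
  e ∘ₗ Ta = q⁻¹ • (Ta ∘ₗ e) - q⁻¹ • Tc ∧
  e ∘ₗ Tb = q⁻¹ • (Tb ∘ₗ e) + q⁻¹ • (Ta ∘ₗ κ.toLinearMap) - q⁻¹ • Td ∧
  e ∘ₗ Tc = q • (Tc ∘ₗ e) ∧
  e ∘ₗ Td = q • (Td ∘ₗ e) + q • (Tc ∘ₗ κ.toLinearMap) ∧
  f ∘ₗ Ta = q⁻¹ • (Ta ∘ₗ f) + Tb ∧
  f ∘ₗ Tb = q • (Tb ∘ₗ f) ∧
  f ∘ₗ Tc = q⁻¹ • (Tc ∘ₗ f) - Ta ∘ₗ (κ⁻¹ : A ≃ₐ[k] A).toLinearMap + Td ∧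
  f ∘ₗ Td = q • (Td ∘ₗ f) - q ^ 2 • (Tb ∘ₗ (κ⁻¹ : A ≃ₐ[k] A).toLinearMap)

/-!
Since `n` is odd, `q²` is again a primitive `n`-th root of unity, so `κ` acts on the basis `uⁱ`
with pairwise distinct eigenvalues `q²ⁱ`. The commutation relations of `κ` with the `T`'s then
force `Ta u = α u`, `Tb u = β`, `Tc u = c u²`, `Td u = d u`. Evaluating the relations for
`f ∘ Ta`, `f ∘ Td`, `e ∘ Ta`, `Ta ∘ Td` and `e ∘ Td` at `u` gives five polynomial equations in
`α, β, c, d`: they express `β` and `d` through `α`, rule out `α = 0`, and leave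
`(α - q)(α - q⁻¹) = 0`, the two roots giving (i) and (ii). These exclude each other because
`Tc u` vanishes in (i) but not in (ii), as `q² ≠ 1`.
-/

theorem Module.Basis.eq_repr_smul_of_apply_eq_smul {ι R M : Type*} [CommRing R] [IsDomain R]
    [AddCommGroup M] [Module R M] (b : Module.Basis ι R M) {φ : M →ₗ[R] M} {μ : ι → R}
    (hμ : Function.Injective μ) (hφ : ∀ i, φ (b i) = μ i • b i) {x : M} {m : ι}
    (hx : φ x = μ m • x) : x = b.repr x m • b m := by
  classical
  have hrepr (j : ι) : b.repr (φ x) j = μ j * b.repr x j := by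
    have : Finsupp.lapply j ∘ₗ b.repr.toLinearMap ∘ₗ φ =
        μ j • (Finsupp.lapply j ∘ₗ b.repr.toLinearMap) :=
      b.ext fun i => by
        rcases eq_or_ne i j with rfl | hij
        · simp [hφ]
        · simp [hφ, hij]
    exact LinearMap.congr_fun this x
  refine b.ext_elem fun j => ?_
  rcases eq_or_ne j m with rfl | hjm
  · simp
  · have : (μ j - μ m) * b.repr x j = 0 := by rw [sub_mul, ← hrepr, hx]; simp
    simp [(mul_eq_zero.mp this).resolve_left (sub_ne_zero.mpr (hμ.ne hjm)), hjm.symm]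

theorem exists_eq_smul_pow_of_apply_eq_smul {k A : Type*} [Field k] [CommRing A] [Algebra k A]
    {n : ℕ} {ζ : k} (hζ : IsPrimitiveRoot ζ n) {u : A} (b : Module.Basis (Fin n) k A)
    (hb : ∀ i : Fin n, b i = u ^ (i : ℕ)) {κ : A ≃ₐ[k] A} (hκu : κ u = ζ • u)
    {m : ℕ} (hm : m < n) {x : A} (hx : κ x = ζ ^ m • x) : ∃ s : k, x = s • u ^ m := by
  have hinj : Function.Injective fun i : Fin n => ζ ^ (i : ℕ) :=
    fun i j h => Fin.ext (hζ.pow_inj i.isLt j.isLt h)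
  have hκb (i : Fin n) : κ.toLinearMap (b i) = ζ ^ (i : ℕ) • b i := by
    simp [hb, hκu, smul_pow]
  exact ⟨_, by simpa [hb] using b.eq_repr_smul_of_apply_eq_smul hinj hκb (m := ⟨m, hm⟩) hx⟩

theorem eq_or_eq_of_coeff_relations {k : Type*} [Field k] {q γ δ α β c d : k} (hq : q ≠ 0)
    (hγ : γ ≠ 0) (hγδ : γ * δ = -q)
    (h₁ : α * γ = q⁻¹ * γ + β) (h₂ : d * γ = q * γ - β)
    (h₃ : α * δ = q⁻¹ * (δ * (α * α + c * β)) - q⁻¹ * c)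
    (h₄ : d * α = q⁻¹ * (c * (β * α + d * β)) + 1)
    (h₅ : d * δ = q * (δ * (β * c + d * d)) + q * (q ^ 2 * c)) :
    (α = q ∧ β = γ * (q - q⁻¹) ∧ c = 0 ∧ d = q⁻¹) ∨
      (α = q⁻¹ ∧ β = 0 ∧ c = γ⁻¹ * (q - q⁻¹) ∧ d = q) := by
  have hqr : q * q⁻¹ = 1 := mul_inv_cancel₀ hq
  have hβ : β = γ * (α - q⁻¹) := by linear_combination -h₁
  have hd : d = q + q⁻¹ - α := mul_right_cancel₀ hγ (by linear_combination h₂ + h₁)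
  subst hβ hd
  have hα : α ≠ 0 := by
    rintro rfl
    have : q ^ 2 = 0 := by grind
    exact hq (pow_eq_zero_iff two_ne_zero |>.mp this)
  have hc : c * q = δ * (α - q) := by
    refine mul_left_cancel₀ hα ?_
    linear_combination q * h₃ + q * q⁻¹ * c * (α - q⁻¹) * hγδ
      + (δ * α ^ 2 - c * q * α + q * q⁻¹ * c) * hqr
  have hroots : (α - q) * (α - q⁻¹) = 0 := by grind
  rcases mul_eq_zero.mp hroots with hαq | hαq'
  · obtain rfl : α = q := sub_eq_zero.mp hαq
    refine Or.inl ⟨rfl, rfl, ?_, by ring⟩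
    simpa [hq] using hc
  · obtain rfl : α = q⁻¹ := sub_eq_zero.mp hαq'
    refine Or.inr ⟨rfl, by ring, ?_, by ring⟩
    field_simp
    linear_combination γ * hc + (q⁻¹ - q) * hγδ - hqr

namespace IsDUqExtension

variable {k A : Type*} [Field k] [CommRing A] [Algebra k A] {n : ℕ} {q : k} {κ : A ≃ₐ[k] A}
  {e f Ta Tb Tc Td : A →ₗ[k] A} {u : A}

theorem exists_coeffs (hT : IsDUqExtension n q κ e f Ta Tb Tc Td) (hq : q ≠ 0)
    (hκu : κ u = q ^ 2 • u)
    (hweight : ∀ m ≤ 2, ∀ x : A, κ x = (q ^ 2) ^ m • x → ∃ s : k, x = s • u ^ m) :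
    ∃ α β c d : k,
      Ta u = α • u ∧ Tb u = β • (1 : A) ∧ Tc u = c • u ^ 2 ∧ Td u = d • u := by
  obtain ⟨-, -, -, -, -, -, -, -, -, -, -, -, -, -, -, -, -, -, hκa, hκb, hκc, hκd, -⟩ := hT
  have hκa' := LinearMap.congr_fun hκa u
  have hκb' := LinearMap.congr_fun hκb u
  have hκc' := LinearMap.congr_fun hκc u
  have hκd' := LinearMap.congr_fun hκd u
  simp only [LinearMap.comp_apply, LinearMap.smul_apply, AlgEquiv.toLinearMap_apply, hκu,
    map_smul, smul_smul] at hκa' hκb' hκc' hκd'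
  obtain ⟨α, hα⟩ := hweight 1 (by norm_num) _ (by rw [hκa', pow_one])
  obtain ⟨β, hβ⟩ := hweight 0 (by norm_num) _
    (by rw [hκb', pow_zero, inv_pow, inv_mul_cancel₀ (pow_ne_zero 2 hq)])
  obtain ⟨c, hc⟩ := hweight 2 (by norm_num) _ (by rw [hκc', sq (q ^ 2)])
  obtain ⟨d, hd⟩ := hweight 1 (by norm_num) _ (by rw [hκd', pow_one])
  exact ⟨α, β, c, d, by rwa [pow_one] at hα, by rwa [pow_zero] at hβ, hc, by rwa [pow_one] at hd⟩

theorem coeff_relations (hT : IsDUqExtension n q κ e f Ta Tb Tc Td) (hq : q ≠ 0)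
    (hu2 : u ^ 2 ≠ 0) {γ δ α β c d : k} (hκu : κ u = q ^ 2 • u) (hfu : f u = γ • (1 : A))
    (heu : e u = δ • u ^ 2) (hA : Ta u = α • u) (hB : Tb u = β • (1 : A))
    (hC : Tc u = c • u ^ 2) (hD : Td u = d • u) :
    α * γ = q⁻¹ * γ + β ∧ d * γ = q * γ - β ∧
      α * δ = q⁻¹ * (δ * (α * α + c * β)) - q⁻¹ * c ∧
      d * α = q⁻¹ * (c * (β * α + d * β)) + 1 ∧
      d * δ = q * (δ * (β * c + d * d)) + q * (q ^ 2 * c) := by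
  obtain ⟨hTa1, hTd1, -, -, hPa, hPb, -, hPd, -, -, -, -, -, -, -, -, -, had, -, -, -, -,
    hea, -, -, hed, hfa, -, -, hfd⟩ := hT
  have hu : u ≠ 0 := fun h => hu2 (by rw [h, sq, zero_mul])
  have h1 : (1 : A) ≠ 0 := fun h => hu (by rw [← one_mul u, h, zero_mul])
  have hκinv : (κ⁻¹ : A ≃ₐ[k] A) u = (q ^ 2)⁻¹ • u := by
    rw [AlgEquiv.aut_inv, AlgEquiv.symm_apply_eq, map_smul, hκu, smul_smul,
      inv_mul_cancel₀ (pow_ne_zero 2 hq), one_smul]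
  have hA2 : Ta (u ^ 2) = (α * α + c * β) • u ^ 2 := by
    simp only [sq, hPa, hA, hB, hC, smul_mul_smul_comm, mul_one, add_smul]
  have hB2 : Tb (u ^ 2) = (β * α + d * β) • u := by
    simp only [sq, hPb, hA, hB, hD, smul_mul_smul_comm, mul_one, one_mul, add_smul]
  have hD2 : Td (u ^ 2) = (β * c + d * d) • u ^ 2 := by
    simp only [sq, hPd, hB, hC, hD, smul_mul_smul_comm, one_mul, add_smul]
  have hfa' := LinearMap.congr_fun hfa u
  have hfd' := LinearMap.congr_fun hfd u
  have hea' := LinearMap.congr_fun hea u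
  have had' := LinearMap.congr_fun had u
  have hed' := LinearMap.congr_fun hed u
  simp only [LinearMap.comp_apply, LinearMap.add_apply, LinearMap.sub_apply,
    LinearMap.smul_apply, LinearMap.id_apply, AlgEquiv.toLinearMap_apply, map_smul, hκu, hκinv,
    hfu, heu, hA, hB, hC, hD, hA2, hB2, hD2, hTa1, hTd1, smul_smul, ← add_smul, ← sub_smul]
    at hfa' hfd' hea' had' hed'
  rw [mul_inv_cancel_left₀ (pow_ne_zero 2 hq)] at hfd'
  replace had' : (d * α) • u = (q⁻¹ * (c * (β * α + d * β)) + 1) • u := by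
    rw [had', add_smul, one_smul]
  exact ⟨smul_left_injective k h1 hfa', smul_left_injective k h1 hfd',
    smul_left_injective k hu2 hea', smul_left_injective k hu had', smul_left_injective k hu2 hed'⟩

end IsDUqExtension

theorem stmt_16_general (k : Type*) [Field k]
    (n : ℕ) (hn : 3 ≤ n) (hodd : Odd n)
    (q : k) (hq : IsPrimitiveRoot q n)
    (A : Type*) [CommRing A] [Algebra k A]
    (u : A) (b : Module.Basis (Fin n) k A) (hb : ∀ i : Fin n, b i = u ^ (i : ℕ))
    (κ : A ≃ₐ[k] A) (e f : A →ₗ[k] A)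
    (γ δ : k) (hγ : γ ≠ 0) (hγδ : γ * δ = -q)
    (hκu : κ u = q ^ 2 • u) (hfu : f u = γ • (1 : A)) (heu : e u = δ • u ^ 2)
    :
    ∀ (Ta Tb Tc Td : A →ₗ[k] A),
      IsDUqExtension n q κ e f Ta Tb Tc Td →
      Xor'
        (Ta u = q • u ∧ Tb u = (γ * (q - q⁻¹)) • (1 : A) ∧
          Tc u = 0 ∧ Td u = q⁻¹ • u)
        (Ta u = q⁻¹ • u ∧ Tb u = 0 ∧
          Tc u = (γ⁻¹ * (q - q⁻¹)) • u ^ 2 ∧ Td u = q • u) := by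
  intro Ta Tb Tc Td hT
  have hq0 : q ≠ 0 := hq.ne_zero (by omega)
  have hu2 : u ^ 2 ≠ 0 := hb ⟨2, by omega⟩ ▸ b.ne_zero _
  have hq2 : IsPrimitiveRoot (q ^ 2) n := hq.pow_of_coprime 2 hodd.coprime_two_right.symm
  obtain ⟨α, β, c, d, hA, hB, hC, hD⟩ := hT.exists_coeffs hq0 hκu fun m hm _ =>
    exists_eq_smul_pow_of_apply_eq_smul hq2 b hb hκu (by omega)
  obtain ⟨h₁, h₂, h₃, h₄, h₅⟩ := hT.coeff_relations hq0 hu2 hκu hfu heu hA hB hC hD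
  have hq_ne_inv : q - q⁻¹ ≠ 0 := fun h => hq.pow_ne_one_of_pos_of_lt two_ne_zero (by omega)
    (by rw [sq]; nth_rw 1 [sub_eq_zero.mp h]; exact inv_mul_cancel₀ hq0)
  refine (xor_iff_or_and_not_and _ _).mpr ⟨?_, ?_⟩
  · rcases eq_or_eq_of_coeff_relations hq0 hγ hγδ h₁ h₂ h₃ h₄ h₅ with
      ⟨rfl, rfl, rfl, rfl⟩ | ⟨rfl, rfl, rfl, rfl⟩
    · exact Or.inl ⟨hA, hB, by rw [hC, zero_smul], hD⟩
    · exact Or.inr ⟨hA, by rw [hB, zero_smul], hC, hD⟩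
  · rintro ⟨⟨-, -, hc₀, -⟩, -, -, hc, -⟩
    exact smul_ne_zero (mul_ne_zero (inv_ne_zero hγ) hq_ne_inv) hu2 (hc.symm.trans hc₀)

/-- Theorem 5.7 (uniqueness): any extension of the `u_q(sl₂)`-module-algebra structure on
`A = k[u]/(uⁿ - 1)` to a `D(u_q(sl₂))`-module-algebra structure satisfies exactly one of
the two prescriptions (i) or (ii). -/
theorem stmt_16 (k : Type*) [Field k] [IsAlgClosed k] [CharZero k]
    (n : ℕ) (hn : 3 ≤ n) (hodd : Odd n)
    (q : k) (hq : IsPrimitiveRoot q n)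
    (A : Type*) [CommRing A] [Algebra k A]
    (u : A) (b : Module.Basis (Fin n) k A) (hb : ∀ i : Fin n, b i = u ^ (i : ℕ))
    (hu : u ^ n = 1)
    (κ : A ≃ₐ[k] A) (e f : A →ₗ[k] A)
    (hκn : κ ^ n = 1)
    (he1 : e 1 = 0) (hf1 : f 1 = 0)
    (heab : ∀ a c : A, e (a * c) = κ a * e c + e a * c)
    (hfab : ∀ a c : A, f (a * c) = a * f c + f a * κ⁻¹ c)
    (hen : e ^ n = 0) (hfn : f ^ n = 0)
    (hκe : κ.toLinearMap ∘ₗ e = q ^ 2 • (e ∘ₗ κ.toLinearMap))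
    (hκf : κ.toLinearMap ∘ₗ f = (q⁻¹) ^ 2 • (f ∘ₗ κ.toLinearMap))
    (hef : (q - q⁻¹) • (e ∘ₗ f - f ∘ₗ e) =
      κ.toLinearMap - (κ⁻¹ : A ≃ₐ[k] A).toLinearMap)
    (γ δ : k) (hγ : γ ≠ 0) (hδ : δ ≠ 0) (hγδ : γ * δ = -q)
    (hκu : κ u = q ^ 2 • u) (hfu : f u = γ • (1 : A)) (heu : e u = δ • u ^ 2)
    :
    ∀ (Ta Tb Tc Td : A →ₗ[k] A),
      IsDUqExtension n q κ e f Ta Tb Tc Td →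
      Xor'
        (Ta u = q • u ∧ Tb u = (γ * (q - q⁻¹)) • (1 : A) ∧
          Tc u = 0 ∧ Td u = q⁻¹ • u)
        (Ta u = q⁻¹ • u ∧ Tb u = 0 ∧
          Tc u = (γ⁻¹ * (q - q⁻¹)) • u ^ 2 ∧ Td u = q • u) :=
  stmt_16_general k n hn hodd q hq A u b hb κ e f γ δ hγ hγδ hκu hfu heu
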